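/- In a (P₂+P₃, C₄)-free graph G containing an induced 6-cycle C = v₁...v₆, every vertex u outside C with at least one neighbor on C satisfies: N(u) ∩ C = C, or N(u) ∩ C = {vᵢ, vᵢ₊₃} for some i, or N(u) ∩ C = C \ {vᵢ₋₁, vᵢ₋₂} for some i (indices mod 6). -/

import Mathlib

/-!
Together with `u`, the induced cycle spans an induced copy of the 6-cycle with one apex whose
neighbourhood is `N = N(u) ∩ C`. Since `G` has no induced `C₄`, `v i, v (i+2) ∈ N` forces
`v (i+1) ∈ N`. Since it has no induced `P₂ + P₃`, every `v i ∈ N` has another neighbour of `u`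
among `v (i+2), v (i+3), v (i+4)` (else the edge `u (v i)` and the path
`v (i+2) v (i+3) v (i+4)`) and among `v (i+1), v (i+3), v (i+4)` (else the edge
`v (i+3) v (i+4)` and the path `v (i+1) v i u`). Exactly the listed subsets of the 6-cycle
satisfy these three local rules, which is checked by enumerating all of them.
-/

open SimpleGraph

/-- A proper coloring of `G` with colors in `Fin ℓ`. -/
def IsProperColoring {V : Type*} (G : SimpleGraph V) (ℓ : ℕ) (f : V → Fin ℓ) : Prop :=
  ∀ ⦃a b : V⦄, G.Adj a b → f a ≠ f b

/-- A walk in the reconfiguration graph `R_ℓ(G)`: a sequence `c 0, c 1, …, c m` of proper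
`ℓ`-colorings of `G` in which consecutive colorings differ on at most one vertex. -/
def IsRecolorSeq {V : Type*} (G : SimpleGraph V) (ℓ m : ℕ) (c : ℕ → V → Fin ℓ) : Prop :=
  (∀ i ≤ m, IsProperColoring G ℓ (c i)) ∧
    ∀ i < m, ∀ a b : V, a ≠ b → c i a ≠ c (i + 1) a → c i b = c (i + 1) b

/-- The number of times the vertex `a` is recolored along the sequence `c 0, …, c m`. -/
def recolorCount {V : Type*} {ℓ : ℕ} (m : ℕ) (c : ℕ → V → Fin ℓ) (a : V) : ℕ :=
  ((Finset.range m).filter fun i => c i a ≠ c (i + 1) a).card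

/-- The cycle `Cₙ` on `Fin n` (for `n ≥ 3`). -/
def cyc (n : ℕ) [NeZero n] : SimpleGraph (Fin n) := SimpleGraph.fromRel fun a b => a + 1 = b

/-- The graph `P₂ + P₃`, the disjoint union of an edge and a path on three vertices. -/
def p2p3 : SimpleGraph (Fin 5) := SimpleGraph.fromRel fun a b =>
  (a = 0 ∧ b = 1) ∨ (a = 2 ∧ b = 3) ∨ (a = 3 ∧ b = 4)

instance (n : ℕ) [NeZero n] : DecidableRel (cyc n).Adj := fun _ _ =>
  decidable_of_iff _ (fromRel_adj _ _ _).symm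

instance : DecidableRel p2p3.Adj := fun _ _ =>
  decidable_of_iff _ (fromRel_adj _ _ _).symm

namespace SimpleGraph

variable {W V : Type*}

def addApex (H : SimpleGraph W) (N : W → Bool) : SimpleGraph (Option W) where
  Adj
    | some a, some b => H.Adj a b
    | none, some b => N b
    | some a, none => N a
    | none, none => False
  symm := ⟨by rintro (_ | a) (_ | b) h <;> simp_all [H.adj_comm]⟩
  loopless := ⟨by rintro (_ | a) h <;> simp_all⟩

instance (H : SimpleGraph W) [DecidableRel H.Adj] (N : W → Bool) :
    DecidableRel (H.addApex N).Adj
  | some a, some b => inferInstanceAs (Decidable (H.Adj a b))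
  | none, some b => inferInstanceAs (Decidable (N b = true))
  | some a, none => inferInstanceAs (Decidable (N a = true))
  | none, none => inferInstanceAs (Decidable False)

def Embedding.addApex {H : SimpleGraph W} {G : SimpleGraph V} [DecidableRel G.Adj]
    (f : H ↪g G) (u : V) (hu : ∀ w, u ≠ f w) :
    H.addApex (fun w => G.Adj u (f w)) ↪g G where
  toFun x := x.elim u f
  inj' := by
    rintro (_ | a) (_ | b) h
    exacts [rfl, (hu b h).elim, (hu a h.symm).elim, congrArg some (f.injective h)]
  map_rel_iff' {x y} := by
    change G.Adj (x.elim u f) (y.elim u f) ↔ _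
    cases x <;> cases y <;> simp [SimpleGraph.addApex, G.adj_comm]

end SimpleGraph

open SimpleGraph

section ApexOnSixCycle

variable {N : Fin 6 → Bool}

lemma nonempty_cyc4_embedding_addApex_cyc6 {i : Fin 6} (h0 : N i) (h1 : ¬ N (i + 1))
    (h2 : N (i + 2)) : Nonempty (cyc 4 ↪g (cyc 6).addApex N) :=
  ⟨⟨⟨![none, some i, some (i + 1), some (i + 2)], by decide +revert⟩, by decide +revert⟩⟩

lemma nonempty_p2p3_embedding_addApex_cyc6_of_far {i : Fin 6} (h0 : N i) (h2 : ¬ N (i + 2))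
    (h3 : ¬ N (i + 3)) (h4 : ¬ N (i + 4)) : Nonempty (p2p3 ↪g (cyc 6).addApex N) :=
  ⟨⟨⟨![none, some i, some (i + 2), some (i + 3), some (i + 4)], by decide +revert⟩,
    by decide +revert⟩⟩

lemma nonempty_p2p3_embedding_addApex_cyc6_of_near {i : Fin 6} (h0 : N i) (h1 : ¬ N (i + 1))
    (h3 : ¬ N (i + 3)) (h4 : ¬ N (i + 4)) : Nonempty (p2p3 ↪g (cyc 6).addApex N) :=
  ⟨⟨⟨![some (i + 3), some (i + 4), some (i + 1), some i, none], by decide +revert⟩,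
    by decide +revert⟩⟩

theorem addApex_cyc6_classification (hP : ¬ Nonempty (p2p3 ↪g (cyc 6).addApex N))
    (hC4 : ¬ Nonempty (cyc 4 ↪g (cyc 6).addApex N)) (hN : ∃ i, N i) :
    (∀ j, N j) ∨ (∃ i, ∀ j, N j ↔ (j = i ∨ j = i + 3)) ∨
      (∃ i, ∀ j, N j ↔ (j ≠ i - 1 ∧ j ≠ i - 2)) := by
  have h_between : ∀ i, N i → N (i + 2) → N (i + 1) := fun i h0 h2 =>
    not_not.1 fun h1 => hC4 (nonempty_cyc4_embedding_addApex_cyc6 h0 h1 h2)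
  have h_far : ∀ i, N i → N (i + 2) ∨ N (i + 3) ∨ N (i + 4) := fun i h0 => by
    by_contra! h
    exact hP (nonempty_p2p3_embedding_addApex_cyc6_of_far h0 h.1 h.2.1 h.2.2)
  have h_near : ∀ i, N i → N (i + 1) ∨ N (i + 3) ∨ N (i + 4) := fun i h0 => by
    by_contra! h
    exact hP (nonempty_p2p3_embedding_addApex_cyc6_of_near h0 h.1 h.2.1 h.2.2)
  clear hP hC4
  decide +revert

end ApexOnSixCycle

/-- in a `(P₂+P₃, C₄)`-free graph containing an induced 6-cycle
`v 0, …, v 5`, every vertex `u` outside the cycle with a neighbor on the cycle is adjacent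
to all of the cycle, or its neighbors on the cycle are exactly `{v i, v (i+3)}` for some
`i`, or exactly `C \ {v (i-1), v (i-2)}` for some `i` (indices mod 6). -/
theorem stmt18 {V : Type*} (G : SimpleGraph V)
    (hP : ¬ Nonempty (p2p3 ↪g G)) (hC4 : ¬ Nonempty (cyc 4 ↪g G))
    (v : Fin 6 → V) (hv : Function.Injective v)
    (hC : ∀ i j, G.Adj (v i) (v j) ↔ (cyc 6).Adj i j) :
    ∀ u : V, (∀ i, u ≠ v i) → (∃ i, G.Adj u (v i)) →
      (∀ i, G.Adj u (v i)) ∨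
      (∃ i : Fin 6, ∀ j, G.Adj u (v j) ↔ (j = i ∨ j = i + 3)) ∨
      (∃ i : Fin 6, ∀ j, G.Adj u (v j) ↔ (j ≠ i - 1 ∧ j ≠ i - 2)) := by
  classical
  intro u hu hex
  let C : cyc 6 ↪g G := ⟨⟨v, hv⟩, hC _ _⟩
  let e := C.addApex u hu
  simpa [C] using addApex_cyc6_classification (fun ⟨f⟩ => hP ⟨f.trans e⟩)
    (fun ⟨f⟩ => hC4 ⟨f.trans e⟩) (by simpa [C] using hex)
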